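/- arXiv:2001.03692 — 6 statements merged into one kernel-verified Lean document; each statement's English description precedes it below -/
import Mathlib

section
/- Let R and E be nonempty finite sets, let k ≥ 1 be an integer, and let ε ≥ 0 be a real number. Let f : R × {1,…,k} × E → ℝ satisfy 0 ≤ f(r,i,e) ≤ 1 for all r, i, e. Suppose that for every index i ∈ {1,…,k} and every function g : R → E, the average (1/|R|)·Σ_{r∈R} f(r, i, g(r)) is at most ε. Then there exists r ∈ R such that the number of indices i ∈ {1,…,k} satisfying f(r,i,e) ≤ 2ε for all e ∈ E is at least k/2. -/
open scoped Classical

/-!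
Fix an index `i` and let the adversary pick, for each `r`, an error pattern maximising
`f r i ·`. Markov's inequality applied to the resulting average shows that `r` is bad for `i`
(some pattern pushes the failure probability above `2ε`) for at most half of the `r`. Counting
the bad pairs `(r, i)` in two ways, some `r` is bad for at most half of the indices.
-/

open Finset

/-- Markov's inequality with a strict threshold, which also covers the case `ε = 0`. -/
lemma two_mul_card_filter_lt_le_card {α : Type*} [Fintype α] {ε : ℝ} (hε : 0 ≤ ε)
    (h : α → ℝ) (h0 : ∀ a, 0 ≤ h a) (hsum : ∑ a, h a ≤ ε * Fintype.card α) :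
    2 * #{a | 2 * ε < h a} ≤ Fintype.card α := by
  set S : Finset α := {a | 2 * ε < h a}
  rcases S.eq_empty_or_nonempty with hS | hS
  · simp [hS]
  have hlt : #S * (2 * ε) < ε * Fintype.card α :=
    calc #S * (2 * ε) = ∑ _a ∈ S, 2 * ε := by simp
      _ < ∑ a ∈ S, h a := sum_lt_sum_of_nonempty hS fun a ha => (mem_filter.mp ha).2
      _ ≤ ∑ a, h a := sum_le_sum_of_subset_of_nonneg (subset_univ S) fun a _ _ => h0 a
      _ ≤ ε * Fintype.card α := hsum
  have hcard : (2 * #S : ℝ) ≤ Fintype.card α := by nlinarith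
  exact_mod_cast hcard

lemma two_mul_card_filter_exists_lt_le_card {R E : Type*} [Fintype R] [Fintype E] [Nonempty E]
    {ε : ℝ} (hε : 0 ≤ ε) (φ : R → E → ℝ) (hφ0 : ∀ r e, 0 ≤ φ r e)
    (havg : ∀ g : R → E, ∑ r, φ r (g r) ≤ ε * Fintype.card R) :
    2 * #{r | ∃ e, 2 * ε < φ r e} ≤ Fintype.card R := by
  choose g hg using fun r => Finite.exists_max (φ r)
  have hbad : ∀ r, (∃ e, 2 * ε < φ r e) ↔ 2 * ε < φ r (g r) :=
    fun r => ⟨fun ⟨e, he⟩ => he.trans_le (hg r e), fun h => ⟨g r, h⟩⟩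
  simp only [hbad]
  exact two_mul_card_filter_lt_le_card hε _ (fun r => hφ0 r (g r)) (havg g)

lemma exists_two_mul_card_filter_le_card {R ι : Type*} [Fintype R] [Nonempty R] [Fintype ι]
    (P : R → ι → Prop) [∀ r i, Decidable (P r i)] (hP : ∀ i, 2 * #{r | P r i} ≤ Fintype.card R) :
    ∃ r, 2 * #{i | P r i} ≤ Fintype.card ι := by
  have hdouble : ∑ r, 2 * #{i | P r i} ≤ ∑ _r : R, Fintype.card ι :=
    calc ∑ r, 2 * #{i | P r i} = ∑ i, 2 * #{r | P r i} := by
          simp only [card_filter, ← mul_sum]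
          rw [sum_comm]
      _ ≤ ∑ _i : ι, Fintype.card R := sum_le_sum fun i _ => hP i
      _ = ∑ _r : R, Fintype.card ι := by simp [mul_comm]
  obtain ⟨r, -, hr⟩ := exists_le_of_sum_le univ_nonempty hdouble
  exact ⟨r, hr⟩

theorem stmt_0_general {R E : Type*} [Fintype R] [Fintype E] [Nonempty R] [Nonempty E]
    (k : ℕ) (ε : ℝ) (hε : 0 ≤ ε)
    (f : R → Fin k → E → ℝ)
    (hf0 : ∀ r i e, 0 ≤ f r i e)
    (havg : ∀ (i : Fin k) (g : R → E),
      (1 / (Fintype.card R : ℝ)) * ∑ r : R, f r i (g r) ≤ ε) :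
    ∃ r : R, (k : ℝ) / 2 ≤
      ((Finset.univ.filter (fun i : Fin k => ∀ e : E, f r i e ≤ 2 * ε)).card : ℝ) := by
  have hN : (0 : ℝ) < Fintype.card R := by exact_mod_cast Fintype.card_pos
  have hbad : ∀ i, 2 * #{r | ∃ e, 2 * ε < f r i e} ≤ Fintype.card R := fun i =>
    two_mul_card_filter_exists_lt_le_card hε (fun r => f r i) (fun r => hf0 r i) fun g => by
      have := havg i g
      rwa [one_div_mul_eq_div, div_le_iff₀ hN] at this
  obtain ⟨r, hr⟩ := exists_two_mul_card_filter_le_card _ hbad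
  refine ⟨r, ?_⟩
  have hsplit := card_filter_add_card_filter_not (s := univ) fun i : Fin k => ∃ e, 2 * ε < f r i e
  simp only [not_exists, not_lt, card_univ, Fintype.card_fin] at hsplit hr
  have hr' : (2 * #{i | ∃ e, 2 * ε < f r i e} : ℝ) ≤ k := by exact_mod_cast hr
  have hsplit' : (#{i | ∃ e, 2 * ε < f r i e} + #{i | ∀ e, f r i e ≤ 2 * ε} : ℝ) = k := by
    exact_mod_cast hsplit
  linarith

/-- The combinatorial core of Theorem 1: if for every message index `i` and every
adversary strategy `g : R → E` the average failure probability over the encoder's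
randomness `r` is at most `ε`, then some fixing of `r` is good (failure probability
at most `2ε` against every error pattern) for at least half of the indices. -/
theorem stmt_0 {R E : Type*} [Fintype R] [Fintype E] [Nonempty R] [Nonempty E]
    (k : ℕ) (hk : 1 ≤ k) (ε : ℝ) (hε : 0 ≤ ε)
    (f : R → Fin k → E → ℝ)
    (hf0 : ∀ r i e, 0 ≤ f r i e) (hf1 : ∀ r i e, f r i e ≤ 1)
    (havg : ∀ (i : Fin k) (g : R → E),
      (1 / (Fintype.card R : ℝ)) * ∑ r : R, f r i (g r) ≤ ε) :
    ∃ r : R, (k : ℝ) / 2 ≤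
      ((Finset.univ.filter (fun i : Fin k => ∀ e : E, f r i e ≤ 2 * ε)).card : ℝ) :=
  stmt_0_general k ε hε f hf0 havg
end

section
/- Let n ≥ 1 be an integer, let S and W be subsets of {1,…,n}, let μ = |W|·|S|/n (a real number), and let δ ∈ (0,1) be a real constant. If π is a uniformly random permutation of {1,…,n} (uniform over all n! permutations), then Pr[|π(S) ∩ W| ≤ (1−δ)·μ] ≤ e^{−δ²μ/2}; equivalently, the number of permutations σ of {1,…,n} with |σ(S) ∩ W| ≤ (1−δ)·μ is at most e^{−δ²μ/2}·n!. -/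
/-
Chernoff's method. Writing `X σ = #(σ(S) ∩ W)`, the generating function `∑_σ (1 - q) ^ X σ` is at
most `n! · exp (-q |W| |S| / n)`, the bound one gets for sampling with replacement: by induction on
`n`, conditioning on the image of one element of `S`. Markov's inequality at
`(1 - δ) ^ ((1 - δ) μ)` then bounds the lower tail by `exp (-(δ + (1 - δ) log (1 - δ)) μ)`, and
`(1 - δ) log (1 - δ) ≥ ((1 - δ)² - 1) / 2` (from `u ≤ sinh u`) turns the exponent into `-δ² μ / 2`.
-/

open Finset Real Equiv
open scoped Nat

theorem one_sub_mul_exp_mul_le {q α : ℝ} (hq0 : 0 ≤ q) (hq1 : q ≤ 1) (hα0 : 0 ≤ α) (hα1 : α ≤ 1) :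
    (1 - q) * exp (q * α) ≤ 1 - q * (1 - α) := by
  have hE : exp (q * α) * (1 - q * α) ≤ 1 := by
    calc exp (q * α) * (1 - q * α) ≤ exp (q * α) * exp (-(q * α)) := by
          gcongr; linarith [add_one_le_exp (-(q * α))]
      _ = 1 := by rw [← exp_add, add_neg_cancel, exp_zero]
  have hqα : q * α ≤ q := mul_le_of_le_one_right hq0 hα1
  -- `1 - q ≤ (1 - q α) (1 - q (1 - α))`, the difference being `q² α (1 - α)`
  nlinarith [exp_pos (q * α), mul_nonneg hq0 hα0,
    mul_nonneg (mul_nonneg hq0 hq0) (mul_nonneg hα0 (sub_nonneg.2 hα1))]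

theorem mul_one_sub_mul_exp_add_le {n w q α : ℝ} (hn : 0 < n) (hw : 0 ≤ w) (hq0 : 0 ≤ q)
    (hq1 : q ≤ 1) (hα0 : 0 ≤ α) (hα1 : α ≤ 1) :
    w * (1 - q) * exp (q * α) + (n - w) ≤ n * exp (-q * w * (1 - α) / n) :=
  calc w * (1 - q) * exp (q * α) + (n - w) ≤ w * (1 - q * (1 - α)) + (n - w) := by
        rw [mul_assoc]; gcongr; exact one_sub_mul_exp_mul_le hq0 hq1 hα0 hα1
    _ = n * (-q * w * (1 - α) / n + 1) := by field_simp; ring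
    _ ≤ n * exp (-q * w * (1 - α) / n) := by gcongr; exact add_one_le_exp _

/-- Conditioning on the image of a fixed element of `S` (in `W`: `w` ways, weight `1 - q`, and
`w - 1` targets left; outside `W`: `m + 1 - w` ways) reduces the exponential bound on `m + 1`
points to the one on `m` points; this inequality closes the induction. -/
theorem mul_exp_add_mul_exp_le {m w s q : ℝ} (hw : 0 ≤ w) (hq0 : 0 ≤ q) (hq1 : q ≤ 1) (hs : 1 ≤ s)
    (hsm : s ≤ m + 1) :
    w * (1 - q) * exp (-q * (w - 1) * (s - 1) / m) + (m + 1 - w) * exp (-q * w * (s - 1) / m)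
      ≤ (m + 1) * exp (-q * w * s / (m + 1)) := by
  have hn : 0 < m + 1 := by linarith
  rcases hs.eq_or_lt with rfl | hs
  · simpa using mul_one_sub_mul_exp_add_le hn hw hq0 hq1 le_rfl zero_le_one
  have hm : 0 < m := by linarith
  set α := (s - 1) / m with hα
  have hα0 : 0 ≤ α := by positivity
  have hα1 : α ≤ 1 := by rw [div_le_one hm]; linarith
  have e₁ : -q * (w - 1) * (s - 1) / m = -q * w * α + q * α := by rw [hα]; ring
  have e₂ : -q * w * (s - 1) / m = -q * w * α := by rw [hα]; ring
  have e₃ : -q * w * s / (m + 1) = -q * w * α + -q * w * (1 - α) / (m + 1) := by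
    rw [hα]; field_simp; ring
  rw [e₁, e₂, e₃, exp_add, exp_add]
  have := mul_le_mul_of_nonneg_left (mul_one_sub_mul_exp_add_le hn hw hq0 hq1 hα0 hα1)
    (exp_pos (-q * w * α)).le
  linarith

theorem sq_sub_one_div_two_le_mul_log {x : ℝ} (hx0 : 0 < x) (hx1 : x ≤ 1) :
    (x ^ 2 - 1) / 2 ≤ x * log x := by
  have hu : 0 ≤ -log x := neg_nonneg.2 (log_nonpos hx0.le hx1)
  have hsinh : x * sinh (-log x) = (1 - x ^ 2) / 2 := by
    rw [sinh_eq, neg_neg, exp_log hx0, exp_neg, exp_log hx0]; field_simp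
  nlinarith [mul_le_mul_of_nonneg_left (self_le_sinh_iff.2 hu) hx0.le]

theorem sum_perm_prod_image {α R : Type*} [Fintype α] [DecidableEq α] [CommSemiring R]
    (S : Finset α) (τ : Perm α) (g : α → R) :
    ∑ σ : Perm α, ∏ i ∈ S.image τ, g (σ i) = ∑ σ : Perm α, ∏ i ∈ S, g (σ i) := by
  simp_rw [prod_image fun a _ b _ h => τ.injective h]
  exact Fintype.sum_bijective (· * τ) (Group.mulRight_bijective τ) _ _ fun σ => rfl

theorem prod_fin_succ_of_zero_mem {M : Type*} [CommMonoid M] {m : ℕ} {S : Finset (Fin (m + 1))}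
    (h0 : 0 ∈ S) (f : Fin (m + 1) → M) :
    ∏ i ∈ S, f i = f 0 * ∏ j ∈ S.preimage Fin.succ (Fin.succ_injective m).injOn, f j.succ := by
  rw [prod_preimage', ← mul_prod_erase S f h0]
  congr 2
  ext i
  simp [Fin.range_succ, and_comm]

theorem sum_perm_prod_fin_succ {R : Type*} [CommSemiring R] {m : ℕ} {S : Finset (Fin (m + 1))}
    (h0 : 0 ∈ S) (g : Fin (m + 1) → R) :
    ∑ σ : Perm (Fin (m + 1)), ∏ i ∈ S, g (σ i) =
      ∑ p, g p * ∑ e : Perm (Fin m),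
        ∏ j ∈ S.preimage Fin.succ (Fin.succ_injective m).injOn, g (swap 0 p (e j).succ) := by
  rw [← Perm.decomposeFin.symm.sum_comp, Fintype.sum_prod_type]
  simp [prod_fin_succ_of_zero_mem h0, mul_sum]

theorem card_preimage_swap_succ {m : ℕ} (W : Finset (Fin (m + 1))) (p : Fin (m + 1)) :
    #(W.preimage (fun y : Fin m => swap 0 p y.succ)
      ((swap 0 p).injective.comp (Fin.succ_injective m)).injOn) = #(W.erase p) := by
  have hrange : ∀ x, (∃ y : Fin m, swap 0 p y.succ = x) ↔ x ≠ p := fun x => by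
    simp_rw [← Equiv.eq_symm_apply, symm_swap, Fin.exists_succ_eq, Ne,
      swap_apply_eq_iff, swap_apply_left]
  rw [card_preimage]
  congr 1
  ext x
  simp [hrange, and_comm]

theorem sum_ite_mem_mul_card_erase {α : Type*} [Fintype α] [DecidableEq α] (W : Finset α)
    (a : ℝ) (F : ℝ → ℝ) :
    ∑ p, (if p ∈ W then a else 1) * F #(W.erase p)
      = #W * a * F (#W - 1) + (Fintype.card α - #W) * F #W := by
  have hterm : ∀ p, (if p ∈ W then a else 1) * F #(W.erase p)
      = if p ∈ W then a * F (#W - 1) else F #W := fun p => by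
    split_ifs with hp
    · rw [cast_card_erase_of_mem hp]
    · rw [erase_eq_of_notMem hp, one_mul]
  simp only [hterm, sum_ite, sum_const, nsmul_eq_mul, filter_not, filter_mem_eq_inter,
    univ_inter, card_univ_sdiff, Nat.cast_sub (card_le_univ W)]
  ring

theorem sum_perm_prod_ite_mem_le (m : ℕ) (S W : Finset (Fin m)) {q : ℝ} (hq0 : 0 ≤ q)
    (hq1 : q ≤ 1) :
    ∑ σ : Perm (Fin m), ∏ i ∈ S, (if σ i ∈ W then 1 - q else 1)
      ≤ m ! * exp (-q * #W * #S / m) := by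
  induction m with
  | zero => simp [eq_empty_of_isEmpty S]
  | succ m ih =>
    rcases S.eq_empty_or_nonempty with rfl | ⟨i₀, hi₀⟩
    · simp [Fintype.card_perm]
    wlog h0 : 0 ∈ S generalizing S i₀
    · have h0' : 0 ∈ S.image (swap i₀ 0) := mem_image.2 ⟨i₀, hi₀, swap_apply_left _ _⟩
      have := this _ 0 h0' h0'
      rwa [sum_perm_prod_image (g := fun x => if x ∈ W then 1 - q else 1),
        card_image_of_injective _ (swap i₀ 0).injective] at this
    set T := S.preimage Fin.succ (Fin.succ_injective m).injOn
    set W' : Fin (m + 1) → Finset (Fin m) := fun p => W.preimage (fun y => swap 0 p y.succ)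
      ((swap 0 p).injective.comp (Fin.succ_injective m)).injOn
    have hT : (#T : ℝ) = #S - 1 := by
      rw [card_preimage]
      simp [Fin.range_succ, ← cast_card_erase_of_mem h0, filter_ne']
    have hinner : ∀ p, ∑ e : Perm (Fin m), ∏ j ∈ T, (if swap 0 p (e j).succ ∈ W then 1 - q else 1)
        ≤ m ! * exp (-q * #(W.erase p) * (#S - 1) / m) := fun p => by
      simpa [W', hT, card_preimage_swap_succ] using ih T (W' p)
    have hS : (1 : ℝ) ≤ #S := by exact_mod_cast card_pos.2 ⟨i₀, hi₀⟩
    have hSm : (#S : ℝ) ≤ m + 1 := by exact_mod_cast (card_le_univ S).trans_eq (Fintype.card_fin _)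
    rw [sum_perm_prod_fin_succ h0 (fun x => if x ∈ W then 1 - q else 1)]
    calc _ ≤ ∑ p, (if p ∈ W then 1 - q else 1) * (m ! * exp (-q * #(W.erase p) * (#S - 1) / m)) :=
          sum_le_sum fun p _ => mul_le_mul_of_nonneg_left (hinner p) (by split_ifs <;> linarith)
      _ = m ! * (#W * (1 - q) * exp (-q * (#W - 1) * (#S - 1) / m)
            + (m + 1 - #W) * exp (-q * #W * (#S - 1) / m)) := by
          rw [sum_ite_mem_mul_card_erase W (1 - q) fun k => m ! * exp (-q * k * (#S - 1) / m),
            Fintype.card_fin]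
          push_cast
          ring
      _ ≤ m ! * ((m + 1) * exp (-q * #W * #S / (m + 1))) := by
          gcongr; exact mul_exp_add_mul_exp_le (Nat.cast_nonneg _) hq0 hq1 hS hSm
      _ = (m + 1)! * exp (-q * #W * #S / (m + 1 : ℕ)) := by
          push_cast [Nat.factorial_succ]; ring

theorem prod_ite_mem_eq_pow_card_image_inter {α β M : Type*} [DecidableEq β] [CommMonoid M]
    {f : α → β} (hf : Function.Injective f) (S : Finset α) (W : Finset β) (r : M) :
    ∏ i ∈ S, (if f i ∈ W then r else 1) = r ^ #(S.image f ∩ W) := by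
  rw [prod_ite, prod_const, prod_const_one, mul_one, ← filter_mem_eq_inter, filter_image,
    card_image_of_injective _ hf]

theorem card_filter_mul_rpow_le_sum_pow {ι : Type*} (s : Finset ι) (X : ι → ℕ) {r : ℝ} (a : ℝ)
    (hr0 : 0 < r) (hr1 : r ≤ 1) :
    #{i ∈ s | (X i : ℝ) ≤ a} * r ^ a ≤ ∑ i ∈ s, r ^ X i :=
  calc #{i ∈ s | (X i : ℝ) ≤ a} * r ^ a ≤ ∑ i ∈ s with (X i : ℝ) ≤ a, r ^ X i := by
        rw [← nsmul_eq_mul]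
        refine card_nsmul_le_sum _ _ _ fun i hi => ?_
        rw [← rpow_natCast]
        exact rpow_le_rpow_of_exponent_ge hr0 hr1 (mem_filter.1 hi).2
    _ ≤ ∑ i ∈ s, r ^ X i :=
        sum_le_sum_of_subset_of_nonneg (filter_subset _ _) fun i _ _ => pow_nonneg hr0.le _

theorem stmt_1_general (n : ℕ) (S W : Finset (Fin n))
    (μ : ℝ) (hμ : μ = (W.card : ℝ) * (S.card : ℝ) / (n : ℝ))
    (δ : ℝ) (hδ0 : 0 < δ) (hδ1 : δ < 1) :
    ((Finset.univ.filter (fun σ : Equiv.Perm (Fin n) =>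
        (((S.image ⇑σ) ∩ W).card : ℝ) ≤ (1 - δ) * μ)).card : ℝ)
      ≤ Real.exp (-δ ^ 2 * μ / 2) * (Nat.factorial n : ℝ) := by
  have hr : 0 < 1 - δ := by linarith
  have hμ0 : 0 ≤ μ := by rw [hμ]; positivity
  have hmgf : ∑ σ : Perm (Fin n), (1 - δ) ^ #(S.image σ ∩ W) ≤ n ! * exp (-δ * μ) := by
    simpa only [prod_ite_mem_eq_pow_card_image_inter (Equiv.injective _), hμ, mul_div_assoc,
      mul_assoc] using sum_perm_prod_ite_mem_le n S W hδ0.le hδ1.le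
  have hmarkov := (card_filter_mul_rpow_le_sum_pow univ (fun σ : Perm (Fin n) => #(S.image σ ∩ W))
    ((1 - δ) * μ) hr (by linarith)).trans hmgf
  rw [rpow_def_of_pos hr, ← le_div_iff₀ (exp_pos _), mul_div_assoc, ← exp_sub] at hmarkov
  refine hmarkov.trans ?_
  rw [mul_comm]
  gcongr
  nlinarith [mul_le_mul_of_nonneg_right (sq_sub_one_div_two_le_mul_log hr (by linarith)) hμ0]

/-- Lower-tail concentration bound for random permutations (Lemma 2.6(i)):
the number of permutations `σ` of `{1,…,n}` with `|σ(S) ∩ W| ≤ (1−δ)μ`,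
where `μ = |W|·|S|/n`, is at most `exp(−δ²μ/2)·n!`. -/
theorem stmt_1 (n : ℕ) (hn : 1 ≤ n) (S W : Finset (Fin n))
    (μ : ℝ) (hμ : μ = (W.card : ℝ) * (S.card : ℝ) / (n : ℝ))
    (δ : ℝ) (hδ0 : 0 < δ) (hδ1 : δ < 1) :
    ((Finset.univ.filter (fun σ : Equiv.Perm (Fin n) =>
        (((S.image ⇑σ) ∩ W).card : ℝ) ≤ (1 - δ) * μ)).card : ℝ)
      ≤ Real.exp (-δ ^ 2 * μ / 2) * (Nat.factorial n : ℝ) :=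
  stmt_1_general n S W μ hμ δ hδ0 hδ1
end

section
/- Let n ≥ 1 be an integer, let S and W be subsets of {1,…,n}, let μ = |W|·|S|/n (a real number), and let δ ∈ (0,1) be a real constant. If π is a uniformly random permutation of {1,…,n} (uniform over all n! permutations), then Pr[|π(S) ∩ W| ≥ (1+δ)·μ] ≤ e^{−δ²μ/3}; equivalently, the number of permutations σ of {1,…,n} with |σ(S) ∩ W| ≥ (1+δ)·μ is at most e^{−δ²μ/3}·n!. -/
/-!
Exponential moments. For `X(σ) = |σ(S) ∩ W|` one has
`(1 + δ) ^ X(σ) = ∑_{T ⊆ S} δ ^ |T| · [σ(T) ⊆ W]`, and for `|T| = k` at most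
`(|W|)_k (n - k)! ≤ (|W| / n) ^ k n!` permutations map `T` into `W`. Summing over `T` gives
`∑_σ (1 + δ) ^ X(σ) ≤ (1 + δ|W|/n) ^ |S| n! ≤ e ^ {δμ} n!`. Markov's inequality for `(1 + δ) ^ X`
and `δ + δ²/3 ≤ (1 + δ) log (1 + δ)` on `[0, 1]` then give the bound.
-/

open Finset Nat Real

theorem Nat.descFactorial_mul_pow_le_pow_mul_descFactorial {w n : ℕ} (h : w ≤ n) :
    ∀ k : ℕ, w.descFactorial k * n ^ k ≤ w ^ k * n.descFactorial k
  | 0 => by simp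
  | k + 1 => by
    have hstep : (w - k) * n ≤ w * (n - k) := by
      rw [Nat.sub_mul, Nat.mul_sub]
      exact Nat.sub_le_sub_left (by rw [Nat.mul_comm k]; gcongr) _
    calc w.descFactorial (k + 1) * n ^ (k + 1)
        = ((w - k) * n) * (w.descFactorial k * n ^ k) := by
          rw [descFactorial_succ, pow_succ]; ring
      _ ≤ (w * (n - k)) * (w ^ k * n.descFactorial k) :=
          Nat.mul_le_mul hstep (descFactorial_mul_pow_le_pow_mul_descFactorial h k)
      _ = w ^ (k + 1) * n.descFactorial (k + 1) := by
          rw [descFactorial_succ, pow_succ]; ring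

theorem Nat.factorial_mul_descFactorial_mul_pow_le {w n k : ℕ} (hw : w ≤ n) (hk : k ≤ n) :
    (n - k)! * w.descFactorial k * n ^ k ≤ w ^ k * n ! := by
  rw [← factorial_mul_descFactorial hk]
  calc (n - k)! * w.descFactorial k * n ^ k
      = (w.descFactorial k * n ^ k) * (n - k)! := by ring
    _ ≤ (w ^ k * n.descFactorial k) * (n - k)! :=
        Nat.mul_le_mul_right _ (descFactorial_mul_pow_le_pow_mul_descFactorial hw k)
    _ = w ^ k * ((n - k)! * n.descFactorial k) := by ring

theorem Real.add_sq_div_three_le_one_add_mul_log_one_add {x : ℝ} (hx0 : 0 ≤ x) (hx1 : x ≤ 1) :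
    x + x ^ 2 / 3 ≤ (1 + x) * log (1 + x) :=
  calc x + x ^ 2 / 3 ≤ (1 + x) * (2 * x / (x + 2)) := by
        rw [mul_div_assoc', le_div_iff₀ (by linarith)]
        nlinarith [mul_nonneg (sq_nonneg x) (sub_nonneg.2 hx1)]
    _ ≤ (1 + x) * log (1 + x) := by gcongr; exact le_log_one_add_of_nonneg hx0

theorem Finset.one_add_pow_card_filter {ι R : Type*} [CommSemiring R] (x : R) (s : Finset ι)
    (p : ι → Prop) [DecidablePred p] :
    (1 + x) ^ #{i ∈ s | p i} = ∑ t ∈ s.powerset with ∀ i ∈ t, p i, x ^ #t := by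
  have hpow : (s.filter p).powerset = {t ∈ s.powerset | ∀ i ∈ t, p i} := by
    ext t
    simp only [mem_powerset, mem_filter, subset_iff]
    grind
  rw [add_comm, ← sum_pow_mul_eq_add_pow, hpow]
  simp

theorem Finset.card_filter_mul_rpow_le_sum {ι : Type*} (s : Finset ι) (X : ι → ℕ) {a t : ℝ}
    (ha : 1 ≤ a) :
    #{i ∈ s | t ≤ (X i : ℝ)} * a ^ t ≤ ∑ i ∈ s, a ^ X i := by
  calc #{i ∈ s | t ≤ (X i : ℝ)} * a ^ t ≤ ∑ i ∈ s with t ≤ (X i : ℝ), a ^ X i := by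
        rw [← nsmul_eq_mul]
        refine card_nsmul_le_sum _ _ _ fun i hi => ?_
        rw [← rpow_natCast]
        exact rpow_le_rpow_of_exponent_le ha (mem_filter.1 hi).2
    _ ≤ ∑ i ∈ s, a ^ X i :=
        sum_le_sum_of_subset_of_nonneg (filter_subset _ _) fun _ _ _ => by positivity

theorem Fintype.card_filter_injective_forall_mem_le {ι β : Type*} [Fintype ι] [DecidableEq ι]
    [Fintype β] [DecidableEq β] (W : Finset β) :
    #{f : ι → β | Function.Injective f ∧ ∀ i, f i ∈ W} ≤ (#W).descFactorial (Fintype.card ι) := by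
  rw [← Fintype.card_coe W, ← Fintype.card_embedding_eq, ← Fintype.card_subtype]
  refine Fintype.card_le_of_injective
    (fun f => ⟨fun i => ⟨f.1 i, f.2.2 i⟩, fun i j h => f.2.1 (congrArg Subtype.val h)⟩) ?_
  intro f g h
  ext i
  exact congrArg Subtype.val (DFunLike.congr_fun h i)

namespace Equiv.Perm

variable {α : Type*} [Fintype α] [DecidableEq α]

theorem card_filter_forall_mem_apply_eq_self (A : Finset α) :
    #{τ : Perm α | ∀ a ∈ A, τ a = a} = (Fintype.card α - #A)! := by
  have e : {τ : Perm α // ∀ a ∈ A, τ a = a} ≃ Perm {a // a ∉ A} :=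
    (Equiv.subtypeEquivRight fun τ => by simp only [not_not]).trans
      (Perm.subtypeEquivSubtypePerm fun a => a ∉ A).symm
  rw [← Fintype.card_subtype, Fintype.card_congr e, Fintype.card_perm,
    Fintype.card_subtype_compl, Fintype.card_coe]

theorem card_filter_forall_mem_apply_eq (T : Finset α) (σ₀ : Perm α) :
    #{σ : Perm α | ∀ a ∈ T, σ a = σ₀ a} = (Fintype.card α - #T)! := by
  rw [← card_filter_forall_mem_apply_eq_self T]
  refine card_equiv (Equiv.mulLeft σ₀⁻¹) fun σ => ?_
  simp only [mem_filter, mem_univ, true_and, coe_mulLeft, Perm.mul_apply, Perm.inv_eq_iff_eq]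

theorem card_filter_forall_mem_apply_mem_le (T W : Finset α) :
    #{σ : Perm α | ∀ a ∈ T, σ a ∈ W} ≤ (Fintype.card α - #T)! * (#W).descFactorial #T := by
  set restrict : Perm α → T → α := fun σ a => σ a
  calc #{σ : Perm α | ∀ a ∈ T, σ a ∈ W}
      ≤ (Fintype.card α - #T)! * #(Finset.image restrict {σ : Perm α | ∀ a ∈ T, σ a ∈ W}) := by
        refine card_le_mul_card_image _ _ fun f hf => ?_
        obtain ⟨σ₀, -, rfl⟩ := mem_image.1 hf
        rw [← card_filter_forall_mem_apply_eq T σ₀]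
        refine card_le_card fun σ hσ => ?_
        simp only [mem_filter, mem_univ, true_and, restrict, funext_iff] at hσ ⊢
        exact fun a ha => hσ.2 ⟨a, ha⟩
    _ ≤ (Fintype.card α - #T)! * #{f : T → α | Function.Injective f ∧ ∀ a, f a ∈ W} := by
        gcongr
        intro f hf
        obtain ⟨σ, hσ, rfl⟩ := mem_image.1 hf
        simp only [mem_filter, mem_univ, true_and] at hσ ⊢
        exact ⟨fun a b h => Subtype.ext (σ.injective h), fun a => hσ a a.2⟩
    _ ≤ (Fintype.card α - #T)! * (#W).descFactorial #T := by
        gcongr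
        simpa using Fintype.card_filter_injective_forall_mem_le (ι := T) W

theorem card_filter_forall_mem_apply_mem_le_pow (T W : Finset α) :
    (#{σ : Perm α | ∀ a ∈ T, σ a ∈ W} : ℝ) ≤ (#W / Fintype.card α) ^ #T * (Fintype.card α)! := by
  have hT : #T ≤ Fintype.card α := card_le_univ T
  have hpos : 0 < Fintype.card α ^ #T := by
    rcases Nat.eq_zero_or_pos #T with h | h
    · simp [h]
    · exact Nat.pow_pos (by omega)
  rw [div_pow, div_mul_eq_mul_div, le_div_iff₀ (by exact_mod_cast hpos)]
  exact_mod_cast (Nat.mul_le_mul_right _ (card_filter_forall_mem_apply_mem_le T W)).trans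
    (factorial_mul_descFactorial_mul_pow_le (card_le_univ W) hT)

theorem sum_one_add_pow_card_image_inter_le (S W : Finset α) {x : ℝ} (hx : 0 ≤ x) :
    ∑ σ : Perm α, (1 + x) ^ #(S.image σ ∩ W)
      ≤ exp (x * (#W * #S / Fintype.card α)) * (Fintype.card α)! := by
  set n := Fintype.card α
  have hcard (σ : Perm α) : #(S.image σ ∩ W) = #{a ∈ S | σ a ∈ W} := by
    rw [← filter_mem_eq_inter, filter_image, card_image_of_injective _ σ.injective]
  calc ∑ σ : Perm α, (1 + x) ^ #(S.image σ ∩ W)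
      = ∑ σ : Perm α, ∑ T ∈ S.powerset with ∀ a ∈ T, σ a ∈ W, x ^ #T := by
        refine sum_congr rfl fun σ _ => ?_
        rw [hcard, one_add_pow_card_filter]
        congr -- the two filters differ only in their decidability instances
    _ = ∑ T ∈ S.powerset, ∑ σ : Perm α with ∀ a ∈ T, σ a ∈ W, x ^ #T :=
        sum_comm' fun _ _ => by simp only [mem_filter, mem_univ, true_and]; tauto
    _ ≤ ∑ T ∈ S.powerset, x ^ #T * ((#W / n) ^ #T * n !) := by
        gcongr with T
        rw [sum_const, nsmul_eq_mul, mul_comm]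
        gcongr
        exact card_filter_forall_mem_apply_mem_le_pow T W
    _ = (x * (#W / n) + 1) ^ #S * n ! := by
        simp_rw [← mul_assoc, ← mul_pow]
        rw [← sum_mul, ← sum_pow_mul_eq_add_pow]
        simp
    _ ≤ exp (x * (#W / n)) ^ #S * n ! := by
        gcongr
        exact add_one_le_exp _
    _ = exp (x * (#W * #S / n)) * n ! := by
        rw [← exp_nat_mul]
        ring_nf

end Equiv.Perm

theorem stmt_2_general (n : ℕ) (S W : Finset (Fin n))
    (μ : ℝ) (hμ : μ = (W.card : ℝ) * (S.card : ℝ) / (n : ℝ))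
    (δ : ℝ) (hδ0 : 0 < δ) (hδ1 : δ < 1) :
    ((Finset.univ.filter (fun σ : Equiv.Perm (Fin n) =>
        (1 + δ) * μ ≤ (((S.image ⇑σ) ∩ W).card : ℝ))).card : ℝ)
      ≤ Real.exp (-δ ^ 2 * μ / 3) * (Nat.factorial n : ℝ) := by
  have hμ0 : 0 ≤ μ := by rw [hμ]; positivity
  have hmarkov := card_filter_mul_rpow_le_sum univ (fun σ : Equiv.Perm (Fin n) => #(S.image σ ∩ W))
    (a := 1 + δ) (t := (1 + δ) * μ) (by linarith)
  have hmgf := Equiv.Perm.sum_one_add_pow_card_image_inter_le S W hδ0.le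
  rw [Fintype.card_fin, ← hμ] at hmgf
  have hchernoff : exp (δ * μ) ≤ exp (-δ ^ 2 * μ / 3) * (1 + δ) ^ ((1 + δ) * μ) := by
    rw [rpow_def_of_pos (by linarith), ← exp_add, exp_le_exp]
    nlinarith [mul_le_mul_of_nonneg_right
      (add_sq_div_three_le_one_add_mul_log_one_add hδ0.le hδ1.le) hμ0]
  refine le_of_mul_le_mul_right ?_ (rpow_pos_of_pos (by linarith : 0 < 1 + δ) ((1 + δ) * μ))
  calc _ ≤ exp (δ * μ) * n ! := hmarkov.trans hmgf
    _ ≤ exp (-δ ^ 2 * μ / 3) * (1 + δ) ^ ((1 + δ) * μ) * n ! := by gcongr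
    _ = _ := by ring

/-- Upper-tail concentration bound for random permutations (Lemma 2.6(ii)):
the number of permutations `σ` of `{1,…,n}` with `|σ(S) ∩ W| ≥ (1+δ)μ`,
where `μ = |W|·|S|/n`, is at most `exp(−δ²μ/3)·n!`. -/
theorem stmt_2 (n : ℕ) (hn : 1 ≤ n) (S W : Finset (Fin n))
    (μ : ℝ) (hμ : μ = (W.card : ℝ) * (S.card : ℝ) / (n : ℝ))
    (δ : ℝ) (hδ0 : 0 < δ) (hδ1 : δ < 1) :
    ((Finset.univ.filter (fun σ : Equiv.Perm (Fin n) =>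
        (1 + δ) * μ ≤ (((S.image ⇑σ) ∩ W).card : ℝ))).card : ℝ)
      ≤ Real.exp (-δ ^ 2 * μ / 3) * (Nat.factorial n : ℝ) :=
  stmt_2_general n S W μ hμ δ hδ0 hδ1
end

section
/- Let n ≥ 1 be an integer, let S and W be subsets of {1,…,n}, and let μ = |W|·|S|/n (a real number). If π is a uniformly random permutation of {1,…,n} (uniform over all n! permutations), then for any natural number d with d ≥ 6μ, Pr[|π(S) ∩ W| ≥ d] ≤ 2^{−d}; equivalently, the number of permutations σ of {1,…,n} with |σ(S) ∩ W| ≥ d is at most 2^{−d}·n!. -/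
/-!
Every `σ` with `|σ(S) ∩ W| ≥ d` maps some `d`-subset `T ⊆ S` into `W`. For a fixed `T` there
are at most `(w)_d (n - d)!` such permutations, where `w = |W|` and `(w)_d` is the falling
factorial (an injection `T ↪ W`, then a permutation of the rest), so with `s = |S|` the union
bound gives
`C(s, d) (w)_d (n - d)! ≤ (s^d / d!) (w / n)^d n! = μ^d / d! · n!`.
Finally `d^d / d! ≤ e^d`, so `μ ≤ d / 6` gives `μ^d / d! ≤ (e / 6)^d ≤ 2^{-d}`.
-/

open Finset Equiv Nat

section PermCounting

variable {α : Type*} [Fintype α] [DecidableEq α]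

theorem card_filter_perm_fixing (T : Finset α) :
    #{σ : Perm α | ∀ x ∈ T, σ x = x} = (Fintype.card α - #T)! := by
  have hfix : #{σ : Perm α | ∀ x ∈ T, σ x = x} =
      Fintype.card {σ : Perm α // ∀ x, ¬x ∉ T → σ x = x} := by
    simp only [Fintype.card_subtype, not_not]
  rw [hfix, ← Fintype.card_congr (Perm.subtypeEquivSubtypePerm (· ∉ T)), Fintype.card_perm,
    Fintype.card_subtype, filter_not, filter_mem_eq_inter, univ_inter, ← compl_eq_univ_sdiff,
    card_compl]

theorem card_filter_perm_eqOn (σ₀ : Perm α) (T : Finset α) :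
    #{σ : Perm α | ∀ x ∈ T, σ x = σ₀ x} = (Fintype.card α - #T)! := by
  rw [← card_filter_perm_fixing T]
  refine card_nbij' (σ₀⁻¹ * ·) (σ₀ * ·) ?_ ?_ (fun _ _ ↦ by simp) (fun _ _ ↦ by simp)
  · intro σ hσ
    simp_all [Perm.mul_apply]
  · intro τ hτ
    simp_all [Perm.mul_apply]

theorem card_filter_perm_mapsTo_le (T W : Finset α) :
    #{σ : Perm α | ∀ x ∈ T, σ x ∈ W} ≤
      (Fintype.card α - #T)! * (#W).descFactorial #T := by
  set A : Finset (Perm α) := {σ | ∀ x ∈ T, σ x ∈ W}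
  let restrict : Perm α → T → α := fun σ x ↦ σ x
  have hfiber :
      ∀ f ∈ A.image restrict, #{σ ∈ A | restrict σ = f} ≤ (Fintype.card α - #T)! := by
    rintro _ hf
    obtain ⟨σ₀, -, rfl⟩ := mem_image.1 hf
    rw [← card_filter_perm_eqOn σ₀ T]
    refine card_le_card fun σ hσ ↦ ?_
    simp only [mem_filter, mem_univ, true_and, restrict, funext_iff, Subtype.forall] at hσ ⊢
    exact hσ.2
  have himage : A.image restrict ⊆ univ.image fun e : T ↪ W ↦ fun x ↦ (e x : α) := by
    intro f hf
    obtain ⟨σ, hσ, rfl⟩ := mem_image.1 hf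
    simp only [A, mem_filter, mem_univ, true_and] at hσ
    exact mem_image.2 ⟨⟨fun x ↦ ⟨σ x, hσ x x.2⟩, fun x y h ↦ Subtype.ext (σ.injective
      (congrArg Subtype.val h))⟩, mem_univ _, rfl⟩
  calc #A ≤ (Fintype.card α - #T)! * #(A.image restrict) := card_le_mul_card_image _ _ hfiber
    _ ≤ (Fintype.card α - #T)! * #(univ : Finset (T ↪ W)) := by
        gcongr
        exact (card_le_card himage).trans card_image_le
    _ = (Fintype.card α - #T)! * (#W).descFactorial #T := by
        rw [Finset.card_univ, Fintype.card_embedding_eq, Fintype.card_coe, Fintype.card_coe]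

theorem card_filter_le_card_image_inter_le (S W : Finset α) (d : ℕ) :
    #{σ : Perm α | d ≤ #(S.image σ ∩ W)} ≤
      (#S).choose d * ((Fintype.card α - d)! * (#W).descFactorial d) := by
  have hcover : ({σ : Perm α | d ≤ #(S.image σ ∩ W)} : Finset (Perm α)) ⊆
      (S.powersetCard d).biUnion fun T ↦ {σ : Perm α | ∀ x ∈ T, σ x ∈ W} := by
    intro σ hσ
    rw [mem_filter, ← filter_mem_eq_inter, filter_image,
      card_image_of_injective _ σ.injective] at hσ
    obtain ⟨T, hTS, hTd⟩ := exists_subset_card_eq hσ.2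
    refine mem_biUnion.2 ⟨T, mem_powersetCard.2 ⟨hTS.trans (filter_subset _ _), hTd⟩, ?_⟩
    simp only [mem_filter, mem_univ, true_and]
    exact fun x hx ↦ (mem_filter.1 (hTS hx)).2
  calc _ ≤ #((S.powersetCard d).biUnion fun T ↦ {σ : Perm α | ∀ x ∈ T, σ x ∈ W}) :=
        card_le_card hcover
    _ ≤ #(S.powersetCard d) * ((Fintype.card α - d)! * (#W).descFactorial d) := by
        refine card_biUnion_le_card_mul _ _ _ fun T hT ↦ ?_
        rw [← (mem_powersetCard.1 hT).2]
        exact card_filter_perm_mapsTo_le T W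
    _ = _ := by rw [card_powersetCard]

end PermCounting

theorem descFactorial_mul_pow_le {w n : ℕ} (hwn : w ≤ n) (d : ℕ) :
    w.descFactorial d * n ^ d ≤ n.descFactorial d * w ^ d := by
  induction d with
  | zero => simp
  | succ d ih =>
    have hstep : (w - d) * n ≤ (n - d) * w := by
      rw [Nat.sub_mul, Nat.sub_mul, Nat.mul_comm w n]
      exact Nat.sub_le_sub_left (Nat.mul_le_mul_left d hwn) _
    calc w.descFactorial (d + 1) * n ^ (d + 1)
        = ((w - d) * n) * (w.descFactorial d * n ^ d) := by rw [descFactorial_succ]; ring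
      _ ≤ ((n - d) * w) * (n.descFactorial d * w ^ d) := Nat.mul_le_mul hstep ih
      _ = n.descFactorial (d + 1) * w ^ (d + 1) := by rw [descFactorial_succ]; ring

theorem choose_mul_factorial_mul_descFactorial_le {s w n d : ℕ} (hwn : w ≤ n) (hn : 0 < n) :
    ((s.choose d * ((n - d)! * w.descFactorial d) : ℕ) : ℝ) ≤
      ((w : ℝ) * s / n) ^ d / d ! * n ! := by
  rcases lt_or_ge n d with hnd | hdn
  · rw [descFactorial_eq_zero_iff_lt.2 (hwn.trans_lt hnd)]
    simp only [Nat.mul_zero, Nat.cast_zero]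
    positivity
  have hchoose : (s.choose d : ℝ) ≤ (s : ℝ) ^ d / d ! := choose_le_pow_div d s
  have hdesc : (w.descFactorial d : ℝ) ≤ n.descFactorial d * ((w : ℝ) / n) ^ d := by
    rw [div_pow, ← mul_div_assoc, le_div_iff₀ (by positivity)]
    exact_mod_cast descFactorial_mul_pow_le hwn d
  have hfact : ((n - d)! : ℝ) * n.descFactorial d = n ! := by
    exact_mod_cast factorial_mul_descFactorial hdn
  calc ((s.choose d * ((n - d)! * w.descFactorial d) : ℕ) : ℝ)
      = s.choose d * ((n - d)! * w.descFactorial d) := by push_cast; ring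
    _ ≤ (s : ℝ) ^ d / d ! * ((n - d)! * (n.descFactorial d * ((w : ℝ) / n) ^ d)) := by gcongr
    _ = ((w : ℝ) * s / n) ^ d / d ! * (((n - d)! : ℝ) * n.descFactorial d) := by ring
    _ = ((w : ℝ) * s / n) ^ d / d ! * n ! := by rw [hfact]

theorem pow_div_factorial_le_inv_two_pow {x : ℝ} {d : ℕ} (hx : 0 ≤ x) (hxd : 6 * x ≤ d) :
    x ^ d / d ! ≤ (2 ^ d)⁻¹ := by
  calc x ^ d / d ! ≤ ((d : ℝ) / 6) ^ d / d ! := by gcongr; linarith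
    _ = (d : ℝ) ^ d / d ! / 6 ^ d := by rw [div_pow, div_right_comm]
    _ ≤ Real.exp d / 6 ^ d := by gcongr; exact Real.pow_div_factorial_le_exp _ d.cast_nonneg d
    _ = (Real.exp 1 / 6) ^ d := by rw [div_pow, Real.exp_one_pow]
    _ ≤ (1 / 2) ^ d := pow_le_pow_left₀ (by positivity) (by linarith [Real.exp_one_lt_d9]) d
    _ = (2 ^ d)⁻¹ := by rw [one_div, inv_pow]

/-- Large-deviation bound for random permutations (Lemma 2.6(iii)):
for `d ≥ 6μ` with `μ = |W|·|S|/n`, the number of permutations `σ` of `{1,…,n}`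
with `|σ(S) ∩ W| ≥ d` is at most `2^{−d}·n!`. -/
theorem stmt_3 (n : ℕ) (hn : 1 ≤ n) (S W : Finset (Fin n))
    (μ : ℝ) (hμ : μ = (W.card : ℝ) * (S.card : ℝ) / (n : ℝ))
    (d : ℕ) (hd : 6 * μ ≤ (d : ℝ)) :
    ((Finset.univ.filter (fun σ : Equiv.Perm (Fin n) =>
        d ≤ ((S.image ⇑σ) ∩ W).card)).card : ℝ)
      ≤ (2 : ℝ) ^ (-(d : ℝ)) * (Nat.factorial n : ℝ) := by
  have hW : #W ≤ n := by simpa using card_le_univ W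
  have hμ_nonneg : 0 ≤ μ := by rw [hμ]; positivity
  have hcount := card_filter_le_card_image_inter_le S W d
  rw [Fintype.card_fin] at hcount
  rw [Real.rpow_neg zero_le_two, Real.rpow_natCast]
  calc _ ≤ (((#S).choose d * ((n - d)! * (#W).descFactorial d) : ℕ) : ℝ) := by
        exact_mod_cast hcount
    _ ≤ μ ^ d / d ! * n ! := hμ ▸ choose_mul_factorial_mul_descFactorial_le hW hn
    _ ≤ (2 ^ d)⁻¹ * n ! := by gcongr; exact pow_div_factorial_le_inv_two_pow hμ_nonneg hd
end

section
/- Let y be a binary string (a list over {0,1}) of length n and let d be a natural number with 2d ≤ n. Then the number of binary strings x of length n whose Levenshtein edit distance from y is at most 2d is at most C(n,2d)²·2^{2d}, where C(n,2d) denotes the binomial coefficient n choose 2d. -/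
structure Levenshtein.Cost (α β δ : Type*) where
  delete : α → δ
  insert : β → δ
  substitute : α → β → δ

def Levenshtein.defaultCost {α : Type*} [DecidableEq α] : Levenshtein.Cost α α ℕ where
  delete _ := 1
  insert _ := 1
  substitute a b := if a = b then 0 else 1

def levenshtein {α β δ : Type*} [AddZeroClass δ] [Min δ] (C : Levenshtein.Cost α β δ) :
    List α → List β → δ
  | [], [] => 0
  | [], y :: ys => C.insert y + levenshtein C [] ys
  | x :: xs, [] => C.delete x + levenshtein C xs []
  | x :: xs, y :: ys => min (C.delete x + levenshtein C xs (y :: ys))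
      (min (C.insert y + levenshtein C (x :: xs) ys) (C.substitute x y + levenshtein C xs ys))
termination_by xs ys => xs.length + ys.length

/-!
If `x` and `y` have length `n` and edit distance at most `e`, they share a common subsequence of
length `n - e`: along an optimal edit script every unit of cost removes at most one symbol of `x`
or of `y` from the common part, so `|x| + |y| ≤ 2 |z| + 2 lev(x, y)`. Hence `x` is determined by a
subsequence of `y` of length `n - e`, the positions it occupies in `x`, and the `e` remaining
symbols of `x`, which leaves at most `C(n, e)² · |α|^e` choices.
-/

namespace List.Vector

variable {α : Type*} {n : ℕ}

theorem exists_sublist_finRange_map_get {x : List.Vector α n} {zs : List α}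
    (h : zs <+ x.toList) : ∃ P, P <+ finRange n ∧ P.map x.get = zs := by
  rw [← ofFn_get x, toList_ofFn, ofFn_eq_map, sublist_map_iff] at h
  obtain ⟨P, hP, rfl⟩ := h
  exact ⟨P, hP, rfl⟩

theorem card_filter_map_get_eq_le [Fintype α] [DecidableEq α] {P : List (Fin n)} (hP : P.Nodup)
    (zs : List α) :
    (Finset.univ.filter fun x : List.Vector α n => P.map x.get = zs).card
      ≤ Fintype.card α ^ (n - P.length) := by
  calc _ ≤ (Finset.univ : Finset (↥(P.toFinset)ᶜ → α)).card := by
        refine Finset.card_le_card_of_injOn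
          (fun (x : List.Vector α n) (i : ↥(P.toFinset)ᶜ) => x.get i) (by simp [Set.MapsTo]) ?_
        intro x hx x' hx' h
        simp only [Finset.coe_filter, Finset.mem_univ, true_and, Set.mem_ofPred_eq] at hx hx'
        refine ext fun i => ?_
        by_cases hi : i ∈ P
        · exact map_inj_left.mp (hx.trans hx'.symm) i hi
        · exact congrFun h ⟨i, by simpa using hi⟩
    _ = _ := by
      rw [Finset.card_univ, Fintype.card_fun, Fintype.card_coe, Finset.card_compl, Fintype.card_fin,
        toFinset_card_of_nodup hP]

end List.Vector

namespace Levenshtein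

open List

variable {α : Type*} [DecidableEq α]

theorem levenshtein_defaultCost_nil_left (ys : List α) :
    levenshtein defaultCost [] ys = ys.length := by
  induction ys with
  | nil => rw [levenshtein]; rfl
  | cons y ys ih => rw [levenshtein, ih]; simp [defaultCost, add_comm]

theorem levenshtein_defaultCost_nil_right (xs : List α) :
    levenshtein defaultCost xs [] = xs.length := by
  induction xs with
  | nil => rw [levenshtein]; rfl
  | cons x xs ih => rw [levenshtein, ih]; simp [defaultCost, add_comm]

theorem exists_common_sublist_length_add_length_le (xs ys : List α) :
    ∃ zs, zs <+ xs ∧ zs <+ ys ∧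
      xs.length + ys.length ≤ 2 * zs.length + 2 * levenshtein defaultCost xs ys := by
  induction xs, ys using levenshtein.induct with
  | case1 => exact ⟨[], .slnil, .slnil, by simp [levenshtein]⟩
  | case2 y ys _ =>
    exact ⟨[], nil_sublist _, nil_sublist _, by rw [levenshtein_defaultCost_nil_left]; simp⟩
  | case3 x xs _ =>
    exact ⟨[], nil_sublist _, nil_sublist _, by rw [levenshtein_defaultCost_nil_right]; simp⟩
  | case4 x xs y ys ihDel ihIns ihSub =>
    let Bound (c : ℕ) := ∃ zs, zs <+ x :: xs ∧ zs <+ y :: ys ∧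
      (x :: xs).length + (y :: ys).length ≤ 2 * zs.length + 2 * c
    have hDel : Bound (defaultCost.delete x + levenshtein defaultCost xs (y :: ys)) := by
      obtain ⟨zs, hx, hy, h⟩ := ihDel
      exact ⟨zs, hx.cons x, hy, by simp only [defaultCost, length_cons] at h ⊢; omega⟩
    have hIns : Bound (defaultCost.insert y + levenshtein defaultCost (x :: xs) ys) := by
      obtain ⟨zs, hx, hy, h⟩ := ihIns
      exact ⟨zs, hx, hy.cons y, by simp only [defaultCost, length_cons] at h ⊢; omega⟩
    have hSub : Bound (defaultCost.substitute x y + levenshtein defaultCost xs ys) := by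
      obtain ⟨zs, hx, hy, h⟩ := ihSub
      by_cases hxy : x = y
      · subst hxy
        exact ⟨x :: zs, hx.cons_cons x, hy.cons_cons x, by simp [defaultCost] at h ⊢; omega⟩
      · exact ⟨zs, hx.cons x, hy.cons y, by simp [defaultCost, hxy] at h ⊢; omega⟩
    rw [levenshtein]
    exact min_rec' Bound hDel (min_rec' Bound hIns hSub)

variable {n e : ℕ}

theorem exists_sublistsLen_map_get_of_levenshtein_le {x : List.Vector α n} {y : List α}
    (hy : y.length = n) (h : levenshtein defaultCost x.toList y ≤ e) :
    ∃ zs ∈ y.sublistsLen (n - e), ∃ P ∈ (finRange n).sublistsLen (n - e), P.map x.get = zs := by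
  obtain ⟨zs, hzx, hzy, hlen⟩ := exists_common_sublist_length_add_length_le x.toList y
  rw [x.toList_length, hy] at hlen
  have hk : (zs.take (n - e)).length = n - e := by rw [length_take]; omega
  obtain ⟨P, hP, hPx⟩ := List.Vector.exists_sublist_finRange_map_get ((take_sublist _ _).trans hzx)
  refine ⟨_, mem_sublistsLen.mpr ⟨(take_sublist _ _).trans hzy, hk⟩, P,
    mem_sublistsLen.mpr ⟨hP, ?_⟩, hPx⟩
  rw [← hk, ← hPx, length_map]

theorem card_filter_levenshtein_le_le [Fintype α] (he : e ≤ n) (y : List α) (hy : y.length = n) :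
    (Finset.univ.filter fun x : List.Vector α n => levenshtein defaultCost x.toList y ≤ e).card
      ≤ n.choose e ^ 2 * Fintype.card α ^ e := by
  set k := n - e
  let S := (y.sublistsLen k).toFinset ×ˢ ((finRange n).sublistsLen k).toFinset
  calc _ ≤ (S.biUnion fun p =>
          Finset.univ.filter fun x : List.Vector α n => p.2.map x.get = p.1).card := by
        refine Finset.card_le_card fun x hx => ?_
        obtain ⟨zs, hzs, P, hP, hPx⟩ :=
          exists_sublistsLen_map_get_of_levenshtein_le hy (Finset.mem_filter.mp hx).2
        simp only [S, Finset.mem_biUnion, Finset.mem_product, mem_toFinset, Finset.mem_filter,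
          Finset.mem_univ, true_and]
        exact ⟨(zs, P), ⟨hzs, hP⟩, hPx⟩
    _ ≤ S.card * Fintype.card α ^ e := by
        refine Finset.card_biUnion_le_card_mul _ _ _ fun p hp => ?_
        obtain ⟨hP, hPlen⟩ := mem_sublistsLen.mp (mem_toFinset.mp (Finset.mem_product.mp hp).2)
        have := List.Vector.card_filter_map_get_eq_le (hP.nodup (nodup_finRange n)) p.1
        rwa [hPlen, Nat.sub_sub_self he] at this
    _ ≤ n.choose e ^ 2 * Fintype.card α ^ e := by
        rw [Finset.card_product, sq, ← Nat.choose_symm he]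
        gcongr
        · exact (toFinset_card_le _).trans_eq (by rw [length_sublistsLen, hy])
        · exact (toFinset_card_le _).trans_eq (by rw [length_sublistsLen, length_finRange])

end Levenshtein

/-- Ball-counting bound for edit distance (key step of Lemma 4.1): the number of
binary strings of length `n` within Levenshtein edit distance `2d` of a fixed
string `y` of length `n` is at most `C(n,2d)²·2^{2d}`. -/
theorem stmt_11 (n d : ℕ) (h : 2 * d ≤ n) (y : List Bool) (hy : y.length = n) :
    (Finset.univ.filter (fun x : List.Vector Bool n =>
        levenshtein Levenshtein.defaultCost x.toList y ≤ 2 * d)).card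
      ≤ (n.choose (2 * d)) ^ 2 * 2 ^ (2 * d) := by
  simpa using Levenshtein.card_filter_levenshtein_le_le h y hy
end

section
/- Let n ≥ 1 be an integer, let y' ∈ {0,1}^n be a fixed string, let S ⊆ {1,…,n}, let m₀ ≤ n be a natural number, and let adv be any function assigning to each string in {0,1}^n a subset of {1,…,n} of size at most m₀ (the adversary's corrupted positions, chosen as a function of the observed word). Let π be uniformly distributed over all n! permutations of {1,…,n} and let w be uniformly distributed over {0,1}^n, with π and w independent, and define z ∈ {0,1}^n by z_j = y'_{π^{-1}(j)} ⊕ w_j for each j. Then, with μ₀ = m₀·|S|/n, Pr[ |π(S) ∩ adv(z)| ≥ 1.1·μ₀ ] ≤ exp(−0.01·μ₀/3). -/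
/-!
Since `w` is uniform and independent of `π`, so is the masked word `z = (y' ∘ π⁻¹) ⊕ w`: for each
`π` the map `w ↦ z` is a bijection. Hence the count over pairs `(π, w)` is a sum, over the observed
word `v`, of the number of permutations `π` with `|π(S) ∩ T| ≥ 1.1 μ₀` for the fixed set
`T = adv v`. That number is bounded with the `k`-th factorial moment: summing `C(|π(S) ∩ T|, k)`
over all `π` counts pairs (`k`-subset `A` of `T`, `π` with `A ⊆ π(S)`), giving at most
`μ₀ᵏ n! / k!`, so Markov's inequality bounds the probability by `μ₀ᵏ / a^(k)` with `a = ⌈1.1 μ₀⌉`.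
For `k = ⌈μ₀ / 10⌉` this is at most `exp (-μ₀ / 300)`.
-/

open Finset Equiv Nat

theorem Nat.descFactorial_mul_pow_le {s n : ℕ} (h : s ≤ n) (k : ℕ) :
    s.descFactorial k * n ^ k ≤ s ^ k * n.descFactorial k := by
  induction k with
  | zero => simp
  | succ k ih =>
    have step : (s - k) * n ≤ s * (n - k) := by
      rw [Nat.sub_mul, Nat.mul_sub, Nat.mul_comm k n]
      exact Nat.sub_le_sub_left (Nat.mul_le_mul_right k h) _
    calc s.descFactorial (k + 1) * n ^ (k + 1) = (s - k) * n * (s.descFactorial k * n ^ k) := by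
          rw [descFactorial_succ]; ring
      _ ≤ s * (n - k) * (s ^ k * n.descFactorial k) := Nat.mul_le_mul step ih
      _ = s ^ (k + 1) * n.descFactorial (k + 1) := by rw [descFactorial_succ]; ring

theorem descFactorial_mul_factorial_sub_le {s n : ℕ} (h : s ≤ n) (k : ℕ) :
    (s.descFactorial k : ℝ) * (n - k)! ≤ ((s : ℝ) / n) ^ k * n ! := by
  rcases le_or_gt k s with hks | hks
  swap
  · rw [descFactorial_eq_zero_iff_lt.2 hks, Nat.cast_zero, zero_mul]
    positivity
  rcases Nat.eq_zero_or_pos k with rfl | hk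
  · simp
  have hn : (0 : ℝ) < n := by exact_mod_cast hk.trans_le (hks.trans h)
  rw [div_pow, div_mul_eq_mul_div, le_div_iff₀ (by positivity),
    ← factorial_mul_descFactorial (hks.trans h)]
  exact_mod_cast calc s.descFactorial k * (n - k)! * n ^ k
      = s.descFactorial k * n ^ k * (n - k)! := by ring
    _ ≤ s ^ k * n.descFactorial k * (n - k)! :=
        Nat.mul_le_mul_right _ (descFactorial_mul_pow_le h k)
    _ = s ^ k * ((n - k)! * n.descFactorial k) := by ring

theorem Real.exp_div_one_add_le {y c : ℝ} (hy : 0 ≤ y) (hyc : y ≤ c) :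
    exp (y / (1 + c)) ≤ 1 + y := by
  have hy1 : 0 < 1 + y := by linarith
  calc exp (y / (1 + c)) ≤ exp (1 - (1 + y)⁻¹) := by
        have : 1 - (1 + y)⁻¹ = y / (1 + y) := by field_simp; ring
        rw [exp_le_exp, this]
        exact div_le_div_of_nonneg_left hy hy1 (by linarith)
    _ ≤ exp (log (1 + y)) := exp_le_exp.2 (one_sub_inv_le_log_of_pos hy1)
    _ = 1 + y := exp_log hy1

open Real in
theorem exists_le_pow_mul_exp_le_descFactorial {μ : ℝ} (hμ : 0 ≤ μ) {a : ℕ} (ha : 1.1 * μ ≤ a) :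
    ∃ k ≤ a, μ ^ k * exp (0.01 * μ / 3) ≤ a.descFactorial k := by
  rcases hμ.eq_or_lt with rfl | hμ
  · exact ⟨0, Nat.zero_le _, by simp⟩
  set k := ⌈μ / 10⌉₊
  have hk_lt : (k : ℝ) < μ / 10 + 1 := ceil_lt_add_one (by positivity)
  have hk_ge : μ / 10 ≤ k := le_ceil _
  have hka : k ≤ a := by
    have : (k : ℝ) < a + 1 := by linarith
    exact Nat.lt_succ_iff.1 (by exact_mod_cast this)
  -- `a - i ≥ μ (1 + yᵢ) ≥ μ exp (yᵢ / 1.1)` with `yᵢ = 0.1 - i / μ ∈ [0, 0.1]`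
  have factor (i : ℕ) (hi : i ∈ range k) : μ * exp ((0.1 - i / μ) / 1.1) ≤ (a : ℝ) - i := by
    have hik : (i : ℝ) + 1 ≤ k := by exact_mod_cast mem_range.1 hi
    have hiμ : (i : ℝ) / μ ≤ 0.1 := by rw [div_le_iff₀ hμ]; linarith
    calc μ * exp ((0.1 - i / μ) / 1.1) = μ * exp ((0.1 - i / μ) / (1 + 0.1)) := by norm_num
      _ ≤ μ * (1 + (0.1 - i / μ)) :=
          mul_le_mul_of_nonneg_left (exp_div_one_add_le (by linarith)
            (by linarith [div_nonneg i.cast_nonneg hμ.le])) hμ.le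
      _ = 1.1 * μ - i := by field_simp; ring
      _ ≤ a - i := by linarith
  have gauss (m : ℕ) : (∑ i ∈ range m, (i : ℝ)) * 2 = m * (m - 1) := by
    induction m with
    | zero => simp
    | succ m ih => rw [sum_range_succ, add_mul, ih]; push_cast; ring
  have exponent : 0.01 * μ / 3 ≤ ∑ i ∈ range k, (0.1 - i / μ) / 1.1 := by
    have : (∑ i ∈ range k, (i : ℝ)) / μ ≤ k / 20 := by
      rw [div_le_iff₀ hμ]; nlinarith [gauss k]
    rw [← sum_div, sum_sub_distrib, ← sum_div, sum_const, card_range, nsmul_eq_mul,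
      le_div_iff₀ (by norm_num)]
    linarith
  refine ⟨k, hka, ?_⟩
  calc μ ^ k * exp (0.01 * μ / 3) ≤ μ ^ k * exp (∑ i ∈ range k, (0.1 - i / μ) / 1.1) := by gcongr
    _ = ∏ i ∈ range k, μ * exp ((0.1 - i / μ) / 1.1) := by
        rw [exp_sum, prod_mul_distrib, prod_const, card_range]
    _ ≤ ∏ i ∈ range k, ((a : ℝ) - i) :=
        prod_le_prod (fun _ _ => by positivity) factor
    _ = a.descFactorial k := by
        rw [descFactorial_eq_prod_range, Nat.cast_prod]
        exact prod_congr rfl fun i hi => (Nat.cast_sub ((mem_range.1 hi).le.trans hka)).symm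

section CountingPermutations

variable {α : Type*} [Fintype α] [DecidableEq α]

theorem card_perm_image_eq_le (A B : Finset α) (hAB : #A = #B) :
    #{σ : Perm α | A.image σ = B} ≤ (#A)! * (Fintype.card α - #A)! := by
  have maps_to (σ : Perm α) (h : A.image σ = B) (a : α) : a ∈ A ↔ σ a ∈ B := by
    rw [← h, σ.injective.mem_finset_image]
  let restrict (σ : {σ : Perm α // A.image σ = B}) :
      (A ↪ B) × ((Aᶜ : Finset α) ↪ (Bᶜ : Finset α)) :=
    (⟨fun a => ⟨σ.1 a, (maps_to σ.1 σ.2 a).1 a.2⟩,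
        fun _ _ h => Subtype.ext (σ.1.injective (congrArg Subtype.val h))⟩,
     ⟨fun a => ⟨σ.1 a, mem_compl.2 fun h => mem_compl.1 a.2 ((maps_to σ.1 σ.2 a).2 h)⟩,
        fun _ _ h => Subtype.ext (σ.1.injective (congrArg Subtype.val h))⟩)
  have restrict_injective : Function.Injective restrict := by
    intro σ τ h
    ext x
    by_cases hx : x ∈ A
    · exact congrArg Subtype.val (DFunLike.congr_fun (congrArg Prod.fst h) ⟨x, hx⟩)
    · exact congrArg Subtype.val (DFunLike.congr_fun (congrArg Prod.snd h) ⟨x, mem_compl.2 hx⟩)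
  have := Fintype.card_le_of_injective restrict restrict_injective
  rwa [Fintype.card_subtype, Fintype.card_prod, Fintype.card_embedding_eq,
    Fintype.card_embedding_eq, Fintype.card_coe, Fintype.card_coe, Fintype.card_coe, Fintype.card_coe, card_compl, card_compl,
    ← hAB, descFactorial_self, descFactorial_self] at this

theorem card_perm_image_subset_le (A S : Finset α) :
    #{σ : Perm α | A.image σ ⊆ S} ≤ (#S).descFactorial #A * (Fintype.card α - #A)! := by
  calc #{σ : Perm α | A.image σ ⊆ S}
      ≤ #((S.powersetCard #A).biUnion fun B => {σ : Perm α | A.image σ = B}) := by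
        refine card_le_card fun σ hσ => mem_biUnion.2 ⟨A.image σ, ?_, by simp⟩
        exact mem_powersetCard.2 ⟨(mem_filter.1 hσ).2, card_image_of_injective _ σ.injective⟩
    _ ≤ ∑ B ∈ S.powersetCard #A, #{σ : Perm α | A.image σ = B} := card_biUnion_le
    _ ≤ ∑ B ∈ S.powersetCard #A, (#A)! * (Fintype.card α - #A)! :=
        sum_le_sum fun B hB => card_perm_image_eq_le A B (mem_powersetCard.1 hB).2.symm
    _ = (#S).descFactorial #A * (Fintype.card α - #A)! := by
        rw [sum_const, card_powersetCard, smul_eq_mul, descFactorial_eq_factorial_mul_choose]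
        ring

theorem card_perm_subset_image_le (A S : Finset α) :
    #{π : Perm α | A ⊆ S.image π} ≤ (#S).descFactorial #A * (Fintype.card α - #A)! := by
  have h : #{π : Perm α | A ⊆ S.image π} = #{σ : Perm α | A.image σ ⊆ S} := by
    refine card_nbij' (·⁻¹) (·⁻¹) ?_ ?_ (fun _ _ => inv_inv _) (fun _ _ => inv_inv _)
    all_goals
      intro π
      simp only [coe_filter, mem_univ, true_and, Set.mem_ofPred_eq, subset_iff, mem_image]
    · rintro h _ ⟨a, ha, rfl⟩
      obtain ⟨b, hb, rfl⟩ := h ha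
      simpa using hb
    · exact fun h a ha => ⟨π a, h ⟨a, ha, rfl⟩, by simp⟩
  exact h ▸ card_perm_image_subset_le A S

theorem card_le_card_image_inter_mul_choose_le (S T : Finset α) (a k : ℕ) :
    #{π : Perm α | a ≤ #(S.image π ∩ T)} * a.choose k ≤
      (#T).choose k * ((#S).descFactorial k * (Fintype.card α - k)!) := by
  have choose_eq (π : Perm α) :
      (#(S.image π ∩ T)).choose k = #{A ∈ T.powersetCard k | A ⊆ S.image π} := by
    rw [← card_powersetCard]
    congr 1
    ext A
    simp only [mem_powersetCard, mem_filter, subset_inter_iff]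
    tauto
  calc #{π : Perm α | a ≤ #(S.image π ∩ T)} * a.choose k
      ≤ ∑ π ∈ {π : Perm α | a ≤ #(S.image π ∩ T)}, (#(S.image π ∩ T)).choose k := by
        rw [← smul_eq_mul]
        exact card_nsmul_le_sum _ _ _ fun π hπ => choose_le_choose k (mem_filter.1 hπ).2
    _ ≤ ∑ π : Perm α, #{A ∈ T.powersetCard k | A ⊆ S.image π} := by
        simp only [← choose_eq]
        exact sum_le_sum_of_subset (filter_subset _ _)
    _ = ∑ A ∈ T.powersetCard k, #{π : Perm α | A ⊆ S.image π} :=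
        sum_card_bipartiteAbove_eq_sum_card_bipartiteBelow (s := univ)
          fun (π : Perm α) A => A ⊆ S.image π
    _ ≤ ∑ A ∈ T.powersetCard k, (#S).descFactorial k * (Fintype.card α - k)! :=
        sum_le_sum fun A hA => (mem_powersetCard.1 hA).2 ▸ card_perm_subset_image_le A S
    _ = (#T).choose k * ((#S).descFactorial k * (Fintype.card α - k)!) := by
        rw [sum_const, card_powersetCard, smul_eq_mul]

theorem card_perm_le_card_image_inter_le (S T : Finset α) {μ : ℝ}
    (hμ : (#T : ℝ) * #S / Fintype.card α ≤ μ) :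
    (#{π : Perm α | 1.1 * μ ≤ (#(S.image π ∩ T) : ℝ)} : ℝ) ≤
      (Fintype.card α)! * Real.exp (-(0.01 * μ) / 3) := by
  set n := Fintype.card α
  have hμ0 : 0 ≤ μ := le_trans (by positivity) hμ
  set a := ⌈1.1 * μ⌉₊
  have event : #{π : Perm α | 1.1 * μ ≤ (#(S.image π ∩ T) : ℝ)} =
      #{π : Perm α | a ≤ #(S.image π ∩ T)} :=
    congrArg card <| filter_congr fun π _ => (Nat.ceil_le (a := 1.1 * μ)).symm
  rw [event]
  set N := #{π : Perm α | a ≤ #(S.image π ∩ T)}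
  obtain ⟨k, hka, hk⟩ := exists_le_pow_mul_exp_le_descFactorial hμ0 (le_ceil (1.1 * μ))
  have moment_nat :
      N * a.descFactorial k ≤ (#T).descFactorial k * ((#S).descFactorial k * (n - k)!) := by
    calc N * a.descFactorial k = k ! * (N * a.choose k) := by
          rw [descFactorial_eq_factorial_mul_choose]; ring
      _ ≤ k ! * ((#T).choose k * ((#S).descFactorial k * (n - k)!)) :=
          Nat.mul_le_mul_left _ (card_le_card_image_inter_mul_choose_le S T a k)
      _ = (#T).descFactorial k * ((#S).descFactorial k * (n - k)!) := by
          rw [descFactorial_eq_factorial_mul_choose (#T)]; ring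
  have moment : (N : ℝ) * a.descFactorial k ≤ μ ^ k * n ! := by
    calc (N : ℝ) * a.descFactorial k
        ≤ (#T).descFactorial k * ((#S).descFactorial k * (n - k)!) := mod_cast moment_nat
      _ ≤ (#T : ℝ) ^ k * (((#S : ℝ) / n) ^ k * n !) :=
          mul_le_mul (mod_cast descFactorial_le_pow _ _)
            (descFactorial_mul_factorial_sub_le (card_le_univ S) k) (by positivity) (by positivity)
      _ = ((#T : ℝ) * #S / n) ^ k * n ! := by rw [mul_div_assoc, mul_pow, mul_assoc]
      _ ≤ μ ^ k * n ! := by gcongr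
  have ha : (0 : ℝ) < a.descFactorial k := by exact_mod_cast descFactorial_pos.2 hka
  rw [← mul_le_mul_iff_of_pos_right ha]
  calc (N : ℝ) * a.descFactorial k ≤ μ ^ k * n ! := moment
    _ = μ ^ k * Real.exp (0.01 * μ / 3) * (n ! * Real.exp (-(0.01 * μ) / 3)) := by
        rw [mul_mul_mul_comm, ← Real.exp_add, neg_div, add_neg_cancel, Real.exp_zero, mul_one]
    _ ≤ a.descFactorial k * (n ! * Real.exp (-(0.01 * μ) / 3)) := by gcongr
    _ = n ! * Real.exp (-(0.01 * μ) / 3) * a.descFactorial k := mul_comm _ _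

end CountingPermutations

theorem card_filter_prod_perm_eq_sum {P W : Type*} [Fintype P] [Fintype W] (e : P → Perm W)
    (E : P → W → Prop) [∀ p, DecidablePred (E p)] :
    #{pw : P × W | E pw.1 (e pw.1 pw.2)} = ∑ w, #{p | E p w} := by
  calc #{pw : P × W | E pw.1 (e pw.1 pw.2)} = ∑ p, ∑ w, if E p (e p w) then 1 else 0 := by
        rw [card_filter, Fintype.sum_prod_type]
    _ = ∑ p, ∑ w, if E p w then 1 else 0 :=
        sum_congr rfl fun p _ => Equiv.sum_comp (e p) fun w => if E p w then 1 else 0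
    _ = ∑ w, #{p | E p w} := by
        rw [sum_comm]
        simp only [card_filter]

theorem stmt_15_general (n : ℕ) (y' : Fin n → Bool) (S : Finset (Fin n))
    (m₀ : ℕ)
    (adv : (Fin n → Bool) → Finset (Fin n)) (hadv : ∀ v, (adv v).card ≤ m₀)
    (μ₀ : ℝ) (hμ₀ : μ₀ = (m₀ : ℝ) * (S.card : ℝ) / (n : ℝ)) :
    ((Finset.univ.filter (fun pw : Equiv.Perm (Fin n) × (Fin n → Bool) =>
        1.1 * μ₀ ≤
          (((S.image ⇑pw.1) ∩
            adv (fun j => xor (y' (pw.1.symm j)) (pw.2 j))).card : ℝ))).card : ℝ)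
      / ((Nat.factorial n : ℝ) * 2 ^ n)
      ≤ Real.exp (-(0.01 * μ₀) / 3) := by
  have pad_involutive (π : Perm (Fin n)) :
      Function.Involutive fun w : Fin n → Bool => fun j => xor (y' (π.symm j)) (w j) := by
    intro w; funext j; simp
  have pad : #{pw : Perm (Fin n) × (Fin n → Bool) |
        1.1 * μ₀ ≤ (#(S.image pw.1 ∩ adv fun j => xor (y' (pw.1.symm j)) (pw.2 j)) : ℝ)} =
      ∑ v, #{π : Perm (Fin n) | 1.1 * μ₀ ≤ (#(S.image π ∩ adv v) : ℝ)} := by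
    convert card_filter_prod_perm_eq_sum (fun π => (pad_involutive π).toPerm)
      (fun π v => 1.1 * μ₀ ≤ (#(S.image π ∩ adv v) : ℝ))
    rfl
  rw [pad]
  have bound (v : Fin n → Bool) :
      (#{π : Perm (Fin n) | 1.1 * μ₀ ≤ (#(S.image π ∩ adv v) : ℝ)} : ℝ) ≤
        n ! * Real.exp (-(0.01 * μ₀) / 3) := by
    have hμ : (#(adv v) : ℝ) * #S / Fintype.card (Fin n) ≤ μ₀ := by
      rw [hμ₀, Fintype.card_fin]
      gcongr
      exact_mod_cast hadv v
    simpa only [Fintype.card_fin] using card_perm_le_card_image_inter_le S (adv v) hμ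
  rw [div_le_iff₀ (by positivity), Nat.cast_sum]
  calc ∑ v, (#{π : Perm (Fin n) | 1.1 * μ₀ ≤ (#(S.image π ∩ adv v) : ℝ)} : ℝ)
      ≤ ∑ _v : Fin n → Bool, n ! * Real.exp (-(0.01 * μ₀) / 3) := sum_le_sum fun v _ => bound v
    _ = Real.exp (-(0.01 * μ₀) / 3) * (n ! * 2 ^ n) := by
        rw [sum_const, Finset.card_univ, Fintype.card_fun, Fintype.card_bool, Fintype.card_fin,
          nsmul_eq_mul]
        push_cast; ring

/-- Probabilistic core of the shared-randomness LDC construction (Theorem 3.1):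
the transmitted word `z` (the `π`-permuted codeword `y'` masked by a uniform pad
`w`) is independent of `π`, so for any adversary choosing at most `m₀` corrupted
positions as a function of `z`, the probability (over uniform `(π, w)`) that at
least `1.1·μ₀` positions of `π(S)` are corrupted, where `μ₀ = m₀·|S|/n`, is at
most `exp(−0.01·μ₀/3)`. Probability is formalized by counting over the uniform
sample space of pairs `(π, w)`. -/
theorem stmt_15 (n : ℕ) (hn : 1 ≤ n) (y' : Fin n → Bool) (S : Finset (Fin n))
    (m₀ : ℕ) (hm₀ : m₀ ≤ n)
    (adv : (Fin n → Bool) → Finset (Fin n)) (hadv : ∀ v, (adv v).card ≤ m₀)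
    (μ₀ : ℝ) (hμ₀ : μ₀ = (m₀ : ℝ) * (S.card : ℝ) / (n : ℝ)) :
    ((Finset.univ.filter (fun pw : Equiv.Perm (Fin n) × (Fin n → Bool) =>
        1.1 * μ₀ ≤
          (((S.image ⇑pw.1) ∩
            adv (fun j => xor (y' (pw.1.symm j)) (pw.2 j))).card : ℝ))).card : ℝ)
      / ((Nat.factorial n : ℝ) * 2 ^ n)
      ≤ Real.exp (-(0.01 * μ₀) / 3) :=
  stmt_15_general n y' S m₀ adv hadv μ₀ hμ₀
end
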